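/- arXiv:1910.10290 — 2 statements merged into one kernel-verified Lean document; each statement's English description precedes it below -/
import Mathlib

section
/- For all integers j < k, G(j,k) satisfies the 'reversed' recursion: G(j,k) = (2 s_j + cos α_j + cos α_{j+1}) G(j+1,k) − cos²(α_{j+1}) G(j+2,k). -/
/-- Auxiliary recursion: `Gaux s α j n` corresponds to `G(j, j-1+n)`. -/
noncomputable def Gaux (s α : ℤ → ℝ) (j : ℤ) : ℕ → ℝ
  | 0 => 0
  | 1 => 1
  | (n+2) => (2 * s (j + n) + Real.cos (α (j + n)) + Real.cos (α (j + n + 1))) * Gaux s α j (n+1)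
      - (Real.cos (α (j + n)))^2 * Gaux s α j n

/-- `G s α j k` is the recursively defined quantity `G(j,k)`, with `G(j,j-1)=0`, `G(j,j)=1`,
`G(j,k) = (2 s_{k-1} + cos α_{k-1} + cos α_k) G(j,k-1) − cos²(α_{k-1}) G(j,k-2)` for `k ≥ j+1`. -/
noncomputable def G (s α : ℤ → ℝ) (j k : ℤ) : ℝ := Gaux s α j (k - (j-1)).toNat

/-- `Pprod α a b = ∏_{i=a}^{b-1} cos (α i)`. -/
noncomputable def Pprod (α : ℤ → ℝ) (a b : ℤ) : ℝ := ∏ i ∈ Finset.Ico a b, Real.cos (α i)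

/-!
For fixed `j`, both sides are sequences in `k` obeying the same forward recursion, whose
coefficients depend only on `k`; so they agree once they agree at `k = j + 1` and `k = j + 2`.
-/

theorem Gaux_add_two (s α : ℤ → ℝ) (j : ℤ) (n : ℕ) :
    Gaux s α j (n + 2) = (2 * s (j + n) + Real.cos (α (j + n)) + Real.cos (α (j + n + 1)))
      * Gaux s α j (n + 1) - Real.cos (α (j + n)) ^ 2 * Gaux s α j n := by
  rw [Gaux]

theorem Gaux_add_two_eq_reversed (s α : ℤ → ℝ) (j : ℤ) (n : ℕ) :
    Gaux s α j (n + 2) = (2 * s j + Real.cos (α j) + Real.cos (α (j + 1)))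
      * Gaux s α (j + 1) (n + 1) - Real.cos (α (j + 1)) ^ 2 * Gaux s α (j + 2) n := by
  induction n using Nat.twoStepInduction with
  | zero => simp [Gaux]
  | one =>
    rw [Gaux_add_two s α j 1, Gaux_add_two s α (j + 1) 0]
    simp only [Gaux, Nat.cast_zero, Nat.cast_one, add_zero]
    ring
  | more m ih₀ ih₁ =>
    have h₁ : j + 1 + ((m + 1 : ℕ) : ℤ) = j + ((m + 2 : ℕ) : ℤ) := by push_cast; ring
    have h₂ : j + 2 + (m : ℤ) = j + ((m + 2 : ℕ) : ℤ) := by push_cast; ring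
    rw [Gaux_add_two s α j (m + 2), ih₁, ih₀, Gaux_add_two s α (j + 1) (m + 1),
      Gaux_add_two s α (j + 2) m, h₁, h₂]
    ring

theorem G_sub_one_add (s α : ℤ → ℝ) (j : ℤ) (n : ℕ) :
    G s α j (j - 1 + n) = Gaux s α j n := by
  simp [G]

theorem stmt4_general (s α : ℤ → ℝ)
    (j k : ℤ) (hjk : j < k) :
    G s α j k = (2 * s j + Real.cos (α j) + Real.cos (α (j+1))) * G s α (j+1) k
      - (Real.cos (α (j+1)))^2 * G s α (j+2) k := by
  obtain ⟨n, rfl⟩ : ∃ n : ℕ, k = j + 1 + n := ⟨(k - j - 1).toNat, by omega⟩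
  rw [show j + 1 + n = j - 1 + ((n + 2 : ℕ) : ℤ) by push_cast; ring, G_sub_one_add,
    show j - 1 + ((n + 2 : ℕ) : ℤ) = j + 1 - 1 + ((n + 1 : ℕ) : ℤ) by push_cast; ring,
    G_sub_one_add,
    show j + 1 - 1 + ((n + 1 : ℕ) : ℤ) = j + 2 - 1 + n by push_cast; ring, G_sub_one_add]
  exact Gaux_add_two_eq_reversed s α j n

theorem stmt4 (s α : ℤ → ℝ) (hs : ∀ i, 0 < s i) (hα : ∀ i, 0 < Real.cos (α i))
    (j k : ℤ) (hjk : j < k) :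
    G s α j k = (2 * s j + Real.cos (α j) + Real.cos (α (j+1))) * G s α (j+1) k
      - (Real.cos (α (j+1)))^2 * G s α (j+2) k :=
  stmt4_general s α j k hjk
end

section
/- For all integers j < k, the matrix product M_{k-1} · M_{k-2} · ⋯ · M_j equals ((−1)^{k−j} / Π(j+1,k+1)) · [[G(j,k), cos α_j · G(j+1,k)], [−cos α_k · G(j,k-1), −cos α_j · cos α_k · G(j+1,k-1)]], where M_i := −sec(α_{i+1}) · [[2 s_i + cos α_i + cos α_{i+1}, cos α_i], [−cos α_{i+1}, 0]]. -/
/-- The Jacobian `M_i` of the billiard collision map in `(ω_i, ω_{i-1})` coordinates. -/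
noncomputable def Mmat (s α : ℤ → ℝ) (i : ℤ) : Matrix (Fin 2) (Fin 2) ℝ :=
  (-(Real.cos (α (i+1)))⁻¹) •
    !![2 * s i + Real.cos (α i) + Real.cos (α (i+1)), Real.cos (α i);
       -Real.cos (α (i+1)), 0]

/-- `MprodAux s α j n = M_{j+n-1} ⋯ M_{j+1} M_j`. -/
noncomputable def MprodAux (s α : ℤ → ℝ) (j : ℤ) : ℕ → Matrix (Fin 2) (Fin 2) ℝ
  | 0 => 1
  | (n+1) => Mmat s α (j + n) * MprodAux s α j n

/-- `Mprod s α j k = M_{k-1} ⋯ M_{j+1} M_j`. -/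
noncomputable def Mprod (s α : ℤ → ℝ) (j k : ℤ) : Matrix (Fin 2) (Fin 2) ℝ :=
  MprodAux s α j (k - j).toNat

/-!
Write `c_i = cos α_i`. Up to the scalar `-c_{i+1}⁻¹`, `M_i` is `[[a_i, c_i], [-c_{i+1}, 0]]` with
`a_i = 2 s_i + c_i + c_{i+1}`, and left multiplication by it sends the column `(G(·,k), -c_k G(·,k-1))`
to `(a_k G(·,k) - c_k² G(·,k-1), -c_{k+1} G(·,k))`, which is the recursion defining `G`. Hence the
claimed form propagates from `k` to `k + 1`, the scalars collecting into `(-1)^(k-j) / Π(j+1,k+1)`.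
-/

lemma Pprod_self (α : ℤ → ℝ) (a : ℤ) : Pprod α a a = 1 := by
  simp [Pprod]

lemma Pprod_add_one (α : ℤ → ℝ) {a b : ℤ} (h : a ≤ b) :
    Pprod α a (b + 1) = Pprod α a b * Real.cos (α b) := by
  rw [Pprod, Pprod, ← Finset.insert_Ico_right_eq_Ico_add_one h,
    Finset.prod_insert Finset.right_notMem_Ico, mul_comm]

lemma Mprod_self (s α : ℤ → ℝ) (j : ℤ) : Mprod s α j j = 1 := by
  simp [Mprod, MprodAux]

lemma Mprod_add_one (s α : ℤ → ℝ) {j k : ℤ} (h : j ≤ k) :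
    Mprod s α j (k + 1) = Mmat s α k * Mprod s α j k := by
  obtain ⟨n, rfl⟩ := Int.exists_add_of_le h
  simp [Mprod, MprodAux, show j + n + 1 - j = ((n + 1 : ℕ) : ℤ) by omega]

lemma G_of_lt (s α : ℤ → ℝ) {j k : ℤ} (h : k < j) : G s α j k = 0 := by
  rw [G, Int.toNat_eq_zero.2 (by omega), Gaux]

lemma G_self (s α : ℤ → ℝ) (j : ℤ) : G s α j j = 1 := by
  simp [G, Gaux]

lemma G_add_one (s α : ℤ → ℝ) {j k : ℤ} (h : j ≤ k) :
    G s α j (k + 1) = (2 * s k + Real.cos (α k) + Real.cos (α (k + 1))) * G s α j k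
      - Real.cos (α k) ^ 2 * G s α j (k - 1) := by
  obtain ⟨n, rfl⟩ := Int.exists_add_of_le h
  have e2 : (j + n + 1 - (j - 1)).toNat = n + 2 := by omega
  have e1 : (j + n - (j - 1)).toNat = n + 1 := by omega
  have e0 : (j + n - 1 - (j - 1)).toNat = n := by omega
  simp only [G, e2, e1, e0, Gaux]

noncomputable def Gmat (s α : ℤ → ℝ) (j k : ℤ) : Matrix (Fin 2) (Fin 2) ℝ :=
  !![G s α j k, Real.cos (α j) * G s α (j + 1) k;
     -Real.cos (α k) * G s α j (k - 1), -Real.cos (α j) * Real.cos (α k) * G s α (j + 1) (k - 1)]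

lemma Mmat_eq_smul_Gmat (s α : ℤ → ℝ) (j : ℤ) :
    Mmat s α j = (-Real.cos (α (j + 1)))⁻¹ • Gmat s α j (j + 1) := by
  rw [Mmat, Gmat, add_sub_cancel_right, G_add_one s α le_rfl, G_self, G_self,
    G_of_lt s α (sub_one_lt j), G_of_lt s α (lt_add_one j)]
  simp

lemma Mmat_mul_Gmat (s α : ℤ → ℝ) {j k : ℤ} (h : j < k) :
    Mmat s α k * Gmat s α j k = (-Real.cos (α (k + 1)))⁻¹ • Gmat s α j (k + 1) := by
  rw [Mmat, Matrix.smul_mul, Gmat, Gmat, add_sub_cancel_right, G_add_one s α h.le,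
    G_add_one s α (Int.add_one_le_of_lt h), Matrix.mul_fin_two]
  ext a b
  fin_cases a <;> fin_cases b <;>
    simp only [Fin.isValue, Fin.zero_eta, Fin.mk_one, Matrix.smul_apply, Matrix.of_apply,
      Matrix.cons_val', Matrix.cons_val_zero, Matrix.cons_val_one, Matrix.cons_val_fin_one,
      smul_eq_mul] <;> ring

theorem Mprod_eq_smul_Gmat (s α : ℤ → ℝ) {j k : ℤ} (hjk : j < k) :
    Mprod s α j k = ((-1 : ℝ) ^ (k - j).toNat / Pprod α (j + 1) (k + 1)) • Gmat s α j k := by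
  induction k, hjk using Int.leInduction with
  | base =>
    rw [Mprod_add_one s α le_rfl, Mprod_self, mul_one, Mmat_eq_smul_Gmat,
      Pprod_add_one α le_rfl, Pprod_self, show (j + 1 - j).toNat = 1 by omega]
    congr 1
    ring
  | succ k hk ih =>
    rw [Mprod_add_one s α (by omega), ih, Matrix.mul_smul, Mmat_mul_Gmat s α hk, smul_smul,
      Pprod_add_one α (by omega : j + 1 ≤ k + 1),
      show (k + 1 - j).toNat = (k - j).toNat + 1 by omega]
    congr 1
    ring

theorem stmt10_general (s α : ℤ → ℝ) (j k : ℤ) (hjk : j < k) :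
    Mprod s α j k = (((-1 : ℝ)^(k - j).toNat / Pprod α (j+1) (k+1)) •
      !![G s α j k, Real.cos (α j) * G s α (j+1) k;
         -Real.cos (α k) * G s α j (k-1),
         -Real.cos (α j) * Real.cos (α k) * G s α (j+1) (k-1)]) :=
  Mprod_eq_smul_Gmat s α hjk

theorem stmt10 (s α : ℤ → ℝ) (hα : ∀ i, Real.cos (α i) ≠ 0) (j k : ℤ) (hjk : j < k) :
    Mprod s α j k = (((-1 : ℝ)^(k - j).toNat / Pprod α (j+1) (k+1)) •
      !![G s α j k, Real.cos (α j) * G s α (j+1) k;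
         -Real.cos (α k) * G s α j (k-1),
         -Real.cos (α j) * Real.cos (α k) * G s α (j+1) (k-1)]) :=
  stmt10_general s α j k hjk
end
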